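/- Let R be a ring, G a finite group acting on R with |G|⁻¹ ∈ k ⊆ R central, and S = R # kG the smash (skew group) product. If I is a nilpotent G-stable ideal of R, then I·(R#kG) = (R#kG)·I is a nilpotent two-sided ideal of R#kG. Consequently, if R#kG is semiprime, then R has no nonzero nilpotent G-stable ideals. -/

import Mathlib

/-!
Write the elements of `S = R # kG` in the basis `u_g`. Since `u_g ι(a) = ι(g a) u_g` and `I` is
`G`-stable, the ideal of `S` generated by `ι(I)` consists exactly of the elements all of whose
coordinates lie in `I`; it is two-sided because `I` is. The coordinates of a product of `m` such
elements are sums of terms `a · g(b)` with `a ∈ I` and `b` a coordinate of a product of `m - 1` of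
them, so they lie in `I ^ m`, and `I ^ n = 0` kills every product of `n` of them. Finally a
nilpotent left ideal of a semiprime ring is zero, and `ι` is injective.
-/

/-- A (left) ideal is nilpotent if all products of some fixed length of its elements
vanish. -/
def IdealIsNilpotent {R : Type*} [Ring R] (I : Ideal R) : Prop :=
  ∃ n : ℕ, 0 < n ∧ ∀ l : List R, l.length = n → (∀ x ∈ l, x ∈ I) → l.prod = 0

/-- A ring is semiprime if `a S a = 0` implies `a = 0`. -/
def IsSemiprimeRing' (S : Type*) [Ring S] : Prop :=
  ∀ a : S, (∀ s : S, a * s * a = 0) → a = 0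

def Ideal.ProdsVanish {R : Type*} [Ring R] (J : Ideal R) (n : ℕ) : Prop :=
  ∀ l : List R, l.length = n → (∀ x ∈ l, x ∈ J) → l.prod = 0

section Semiprime

variable {S : Type*} [Ring S]

theorem Ideal.ProdsVanish.of_succ (hsemi : IsSemiprimeRing' S) {J : Ideal S} {m : ℕ}
    (hm : 0 < m) (h : J.ProdsVanish (m + 1)) : J.ProdsVanish m := by
  rintro (_ | ⟨a, t⟩) hlen hl
  · rw [List.length_nil] at hlen; omega
  refine hsemi _ fun s => ?_
  -- `s` is absorbed into the left ideal `J` by the first factor of the second copy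
  have hsplit : (a :: t).prod * s * (a :: t).prod = ((a :: t) ++ [s * a]).prod * t.prod := by
    simp only [List.prod_append, List.prod_cons, List.prod_nil, one_mul, mul_assoc]
  rw [hsplit, h _ (by simpa using hlen) fun x hx => ?_, zero_mul]
  rcases List.mem_append.1 hx with hx | hx
  · exact hl x hx
  · rw [List.mem_singleton.1 hx]
    exact J.mul_mem_left s (hl a List.mem_cons_self)

theorem IdealIsNilpotent.eq_bot_of_isSemiprimeRing' {J : Ideal S} (hJ : IdealIsNilpotent J)
    (hsemi : IsSemiprimeRing' S) : J = ⊥ := by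
  obtain ⟨n, hn0, hn : J.ProdsVanish n⟩ := hJ
  have h1 : J.ProdsVanish 1 := by
    induction n, hn0 using Nat.le_induction with
    | base => exact hn
    | succ n hn1 ih => exact ih (hn.of_succ hsemi hn1)
  exact eq_bot_iff.2 fun x hx => by simpa using h1 [x] rfl (by simpa using hx)

end Semiprime

theorem Ideal.ProdsVanish.restrictScalars_pow_eq_bot {k R : Type*} [CommSemiring k] [Ring R]
    [Algebra k R] {I : Ideal R} {n : ℕ} (h : I.ProdsVanish n) :
    (I.restrictScalars k) ^ n = ⊥ := by
  rw [Submodule.pow_eq_span_pow_set, Submodule.span_eq_bot]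
  rintro _ hx
  obtain ⟨f, rfl⟩ := Set.mem_pow.1 hx
  exact h _ (by simp) (by simpa [List.mem_ofFn] using fun i => (f i).2)

theorem Submodule.map_pow_le_pow {R A : Type*} [CommSemiring R] [Semiring A] [Algebra R A]
    (f : A →ₐ[R] A) {M : Submodule R A} (hM : M.map f.toLinearMap ≤ M) (n : ℕ) :
    (M ^ n).map f.toLinearMap ≤ M ^ n := by
  rw [Submodule.map_pow]
  exact pow_le_pow_left' hM n

structure IsSkewGroupAlgebra {k R S G : Type*} [CommSemiring k] [Ring R] [Ring S] [Algebra k R]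
    [Algebra k S] [Group G] (ρ : G →* (R ≃ₐ[k] R)) (ι : R →ₐ[k] S) (u : G →* Sˣ)
    [Module R S] (B : Module.Basis G R S) : Prop where
  conj : ∀ (g : G) (r : R), (u g : S) * ι r = ι (ρ g r) * (u g : S)
  smul_eq : ∀ (r : R) (s : S), r • s = ι r * s
  basis_eq : ∀ g : G, B g = (u g : S)

namespace IsSkewGroupAlgebra

variable {k R S G : Type*} [CommSemiring k] [Ring R] [Ring S] [Algebra k R] [Algebra k S]
  [Group G] {ρ : G →* (R ≃ₐ[k] R)} {ι : R →ₐ[k] S} {u : G →* Sˣ} [Module R S]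
  {B : Module.Basis G R S}

theorem basis_one (hS : IsSkewGroupAlgebra ρ ι u B) : B 1 = 1 := by
  rw [hS.basis_eq, map_one, Units.val_one]

theorem repr_ι (hS : IsSkewGroupAlgebra ρ ι u B) (r : R) :
    B.repr (ι r) = Finsupp.single 1 r := by
  rw [← mul_one (ι r), ← hS.smul_eq, ← hS.basis_one, map_smul, B.repr_self,
    Finsupp.smul_single, smul_eq_mul, mul_one]

theorem ι_injective (hS : IsSkewGroupAlgebra ρ ι u B) : Function.Injective ι := fun a b h =>
  Finsupp.single_injective (1 : G) (by simpa only [hS.repr_ι] using congrArg B.repr h)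

theorem smul_basis_mul_smul_basis (hS : IsSkewGroupAlgebra ρ ι u B) (a b : R) (g h : G) :
    (a • B g) * (b • B h) = (a * ρ g b) • B (g * h) := by
  simp only [hS.smul_eq, hS.basis_eq, map_mul, Units.val_mul, mul_assoc]
  rw [← mul_assoc (u g : S), hS.conj, mul_assoc]

variable [Fintype G]

theorem repr_mul (hS : IsSkewGroupAlgebra ρ ι u B) (x y : S) (g : G) :
    B.repr (x * y) g = ∑ h : G, B.repr x h * ρ h (B.repr y (h⁻¹ * g)) := by
  classical
  have hxy : x * y = ∑ h : G, ∑ h' : G, (B.repr x h * ρ h (B.repr y h')) • B (h * h') := by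
    conv_lhs => rw [← B.sum_repr x, ← B.sum_repr y]
    simp only [Finset.sum_mul_sum, hS.smul_basis_mul_smul_basis]
  simp only [hxy, map_sum, map_smul, B.repr_self, Finsupp.coe_finsetSum, Finset.sum_apply,
    Finsupp.smul_apply, Finsupp.single_apply, smul_eq_mul]
  refine Finset.sum_congr rfl fun h _ => ?_
  simp_rw [mul_ite, mul_one, mul_zero, ← eq_inv_mul_iff_mul_eq]
  exact Finset.sum_ite_eq_of_mem' _ _ _ (Finset.mem_univ _)

variable {I : Ideal R}

theorem repr_mul_mem_of_left (hS : IsSkewGroupAlgebra ρ ι u B) (hI : ∀ x ∈ I, ∀ r, x * r ∈ I)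
    {x : S} (hx : ∀ g, B.repr x g ∈ I) (y : S) (g : G) : B.repr (x * y) g ∈ I := by
  rw [hS.repr_mul]
  exact I.sum_mem fun h _ => hI _ (hx h) _

theorem repr_mul_mem_of_right (hS : IsSkewGroupAlgebra ρ ι u B)
    (hIG : ∀ g, ∀ x ∈ I, ρ g x ∈ I) (x : S) {y : S} (hy : ∀ g, B.repr y g ∈ I) (g : G) :
    B.repr (x * y) g ∈ I := by
  rw [hS.repr_mul]
  exact I.sum_mem fun h _ => I.mul_mem_left _ (hIG h _ (hy _))

theorem mem_span_image_iff (hS : IsSkewGroupAlgebra ρ ι u B) (hIG : ∀ g, ∀ x ∈ I, ρ g x ∈ I)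
    {x : S} : x ∈ Ideal.span (ι '' I) ↔ ∀ g, B.repr x g ∈ I := by
  classical
  constructor
  · intro hx
    induction hx using Submodule.span_induction with
    | mem x hx =>
      obtain ⟨a, ha, rfl⟩ := hx
      intro g
      rw [hS.repr_ι, Finsupp.single_apply]
      split_ifs
      exacts [ha, I.zero_mem]
    | zero => simp
    | add x y _ _ hx hy => exact fun g => by simpa using I.add_mem (hx g) (hy g)
    | smul s x _ hx => exact hS.repr_mul_mem_of_right hIG s hx
  · intro hx
    rw [← B.sum_repr x]
    refine Ideal.sum_mem _ fun g _ => ?_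
    have hcomm : B.repr x g • B g = (u g : S) * ι (ρ g⁻¹ (B.repr x g)) := by
      rw [hS.conj, ← AlgEquiv.mul_apply, ← map_mul, mul_inv_cancel, map_one, AlgEquiv.one_apply,
        hS.smul_eq, hS.basis_eq]
    rw [hcomm]
    exact Ideal.mul_mem_left _ _ (Ideal.subset_span ⟨_, hIG _ _ (hx g), rfl⟩)

theorem repr_list_prod_mem_pow (hS : IsSkewGroupAlgebra ρ ι u B)
    (hIG : ∀ g, ∀ x ∈ I, ρ g x ∈ I) (l : List S) (hl : ∀ x ∈ l, ∀ g, B.repr x g ∈ I) (g : G) :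
    B.repr l.prod g ∈ I.restrictScalars k ^ l.length := by
  classical
  induction l generalizing g with
  | nil =>
    rw [List.prod_nil, ← hS.basis_one, B.repr_self, Finsupp.single_apply, List.length_nil,
      pow_zero]
    split_ifs
    exacts [Submodule.mem_one.2 ⟨1, map_one _⟩, zero_mem _]
  | cons x t ih =>
    rw [List.prod_cons, hS.repr_mul, List.length_cons, pow_succ']
    refine Submodule.sum_mem _ fun h _ => Submodule.mul_mem_mul (hl x List.mem_cons_self h) ?_
    have hstable : (I.restrictScalars k).map (ρ h).toAlgHom.toLinearMap ≤ I.restrictScalars k :=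
      Submodule.map_le_iff_le_comap.2 fun y hy => hIG h y hy
    exact Submodule.map_pow_le_pow _ hstable _ <| Submodule.mem_map_of_mem <|
      ih (fun y hy => hl y (List.mem_cons_of_mem _ hy)) _

theorem prodsVanish_span_image (hS : IsSkewGroupAlgebra ρ ι u B)
    (hIG : ∀ g, ∀ x ∈ I, ρ g x ∈ I) {n : ℕ} (h : I.ProdsVanish n) :
    (Ideal.span (ι '' I)).ProdsVanish n := by
  intro l hlen hl
  refine (LinearEquiv.map_eq_zero_iff B.repr).1 (Finsupp.ext fun g => ?_)
  have hcoeff := hS.repr_list_prod_mem_pow hIG l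
    (fun x hx => (hS.mem_span_image_iff hIG).1 (hl x hx)) g
  rwa [hlen, h.restrictScalars_pow_eq_bot, Submodule.mem_bot] at hcoeff

end IsSkewGroupAlgebra

theorem smash_with_group_algebra_nilpotent_ideal_general
    {k : Type*} [Field k]
    {R S : Type*} [Ring R] [Ring S] [Algebra k R] [Algebra k S]
    {G : Type*} [Group G] [Fintype G]
    (ρ : G →* (R ≃ₐ[k] R)) (ι : R →ₐ[k] S) (u : G →* Sˣ)
    (hconj : ∀ (g : G) (r : R), (u g : S) * ι r = ι (ρ g r) * (u g : S))
    [Module R S]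
    (hsmul : ∀ (r : R) (s : S), r • s = ι r * s)
    (B : Module.Basis G R S) (hB : ∀ g : G, B g = (u g : S))
    (I : Ideal R)
    (hI2 : ∀ x ∈ I, ∀ r : R, x * r ∈ I)
    (hIG : ∀ (g : G), ∀ x ∈ I, ρ g x ∈ I)
    (hInil : IdealIsNilpotent I) :
    (∀ x ∈ Ideal.span (⇑ι '' (I : Set R)), ∀ s : S,
        x * s ∈ Ideal.span (⇑ι '' (I : Set R))) ∧
      IdealIsNilpotent (Ideal.span (⇑ι '' (I : Set R))) ∧
      (IsSemiprimeRing' S → I = ⊥) := by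
  have hS : IsSkewGroupAlgebra ρ ι u B := ⟨hconj, hsmul, hB⟩
  obtain ⟨n, hn0, hn⟩ := hInil
  have hJnil : IdealIsNilpotent (Ideal.span (ι '' I)) :=
    ⟨n, hn0, hS.prodsVanish_span_image hIG hn⟩
  refine ⟨fun x hx s => ?_, hJnil, fun hsemi => ?_⟩
  · rw [hS.mem_span_image_iff hIG] at hx ⊢
    exact hS.repr_mul_mem_of_left hI2 hx s
  · have hJ := Ideal.span_eq_bot.1 (hJnil.eq_bot_of_isSemiprimeRing' hsemi)
    exact eq_bot_iff.2 fun a ha =>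
      Ideal.mem_bot.2 ((map_eq_zero_iff ι hS.ι_injective).1 (hJ _ ⟨a, ha, rfl⟩))

/-- Let `S = R # kG` be the skew group algebra of a finite group `G` acting on `R`
(`S` is free as a left `R`-module on the grouplike units `u_g`, which conjugate `R` by
the action).  If `I` is a nilpotent `G`-stable two-sided ideal of `R`, then
`I·S = S·I` is a nilpotent two-sided ideal of `S`; consequently, if `S` is semiprime
then `I = 0`. -/
theorem smash_with_group_algebra_nilpotent_ideal
    {k : Type*} [Field k] [CharZero k]
    {R S : Type*} [Ring R] [Ring S] [Algebra k R] [Algebra k S]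
    {G : Type*} [Group G] [Fintype G]
    (ρ : G →* (R ≃ₐ[k] R)) (ι : R →ₐ[k] S) (u : G →* Sˣ)
    (hconj : ∀ (g : G) (r : R), (u g : S) * ι r = ι (ρ g r) * (u g : S))
    [Module R S] [IsScalarTower R S S]
    (hsmul : ∀ (r : R) (s : S), r • s = ι r * s)
    (B : Module.Basis G R S) (hB : ∀ g : G, B g = (u g : S))
    (I : Ideal R)
    (hI2 : ∀ x ∈ I, ∀ r : R, x * r ∈ I)
    (hIG : ∀ (g : G), ∀ x ∈ I, ρ g x ∈ I)
    (hInil : IdealIsNilpotent I) :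
    (∀ x ∈ Ideal.span (⇑ι '' (I : Set R)), ∀ s : S,
        x * s ∈ Ideal.span (⇑ι '' (I : Set R))) ∧
      IdealIsNilpotent (Ideal.span (⇑ι '' (I : Set R))) ∧
      (IsSemiprimeRing' S → I = ⊥) :=
  smash_with_group_algebra_nilpotent_ideal_general ρ ι u hconj hsmul B hB I hI2 hIG hInil
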